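/- arXiv:2503.08502 — 3 statements merged into one kernel-verified Lean document; each statement's English description precedes it below -/
import Mathlib

section
/- (Flatness, proven direction) Let Γ = (π₁,…,πₙ) be a path of activation patterns in {0,1}^N with r₂(Γ) > 0. If χ(Γ) = 0, then the sequence of Hamming distances to the starting pattern is non-decreasing along the path: d_H(π₁, πᵢ) ≤ d_H(π₁, πᵢ₊₁) for all 1 ≤ i ≤ n−1. -/
/-- `r₁(Γ)`: maximal Hamming distance to the starting pattern along the first `n`
entries of the path `Γ`. -/
def r1 {N : ℕ} (n : ℕ) (Γ : ℕ → Fin N → Bool) : ℕ :=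
  (Finset.range n).sup fun i => hammingDist (Γ 0) (Γ i)

/-- `r₂(Γ)`: total Hamming length of the path `Γ` of length `n`. -/
def r2 {N : ℕ} (n : ℕ) (Γ : ℕ → Fin N → Bool) : ℕ :=
  ∑ i ∈ Finset.range (n - 1), hammingDist (Γ i) (Γ (i + 1))

/-- The space folding measure `χ(Γ) = 1 - r₁(Γ)/r₂(Γ)`. -/
noncomputable def chi {N : ℕ} (n : ℕ) (Γ : ℕ → Fin N → Bool) : ℝ :=
  1 - (r1 n Γ : ℝ) / (r2 n Γ : ℝ)

lemma tri_aux {N : ℕ} (Γ : ℕ → Fin N → Bool) (a : ℕ) :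
    ∀ b, a ≤ b → hammingDist (Γ a) (Γ b) ≤
      ∑ i ∈ Finset.Ico a b, hammingDist (Γ i) (Γ (i + 1)) := by
  intro b hb
  induction b, hb using Nat.le_induction with
  | base => simp
  | succ b hb ih =>
    rw [Finset.sum_Ico_succ_top hb]
    exact le_trans (hammingDist_triangle _ (Γ b) _) (Nat.add_le_add_right ih _)

/-- Flatness, proven direction: if `r₂(Γ) > 0` and `χ(Γ) = 0`,
then the Hamming distance to the starting pattern is non-decreasing along the path. -/
theorem flatness_monotone {N : ℕ} (n : ℕ) (Γ : ℕ → Fin N → Bool)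
    (h2 : 0 < r2 n Γ) (hflat : chi n Γ = 0) :
    ∀ i : ℕ, i + 1 < n →
      hammingDist (Γ 0) (Γ i) ≤ hammingDist (Γ 0) (Γ (i + 1)) := by
  -- r1 = r2
  have hr2R : (0 : ℝ) < (r2 n Γ : ℝ) := by exact_mod_cast h2
  have hr12 : r1 n Γ = r2 n Γ := by
    have : (r1 n Γ : ℝ) / (r2 n Γ : ℝ) = 1 := by
      unfold chi at hflat; linarith
    have := (div_eq_one_iff_eq (ne_of_gt hr2R)).mp this
    exact_mod_cast this
  -- n ≥ 2
  have hn2 : 2 ≤ n := by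
    by_contra h
    interval_cases n <;> simp [r2] at h2
  have hd : ∀ j, hammingDist (Γ 0) (Γ j) ≤ ∑ i ∈ Finset.range j, hammingDist (Γ i) (Γ (i + 1)) := by
    intro j
    have := tri_aux Γ 0 j (Nat.zero_le j)
    rwa [Finset.range_eq_Ico]
  -- pick m attaining the sup
  obtain ⟨m, hm, hms⟩ := Finset.exists_mem_eq_sup (Finset.range n)
    (Finset.nonempty_range_iff.mpr (by omega))
    (fun i => hammingDist (Γ 0) (Γ i))
  rw [Finset.mem_range] at hm
  have hdm : hammingDist (Γ 0) (Γ m) =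
      ∑ i ∈ Finset.range (n - 1), hammingDist (Γ i) (Γ (i + 1)) := by
    have h : r1 n Γ = hammingDist (Γ 0) (Γ m) := hms
    rw [← h, hr12]; rfl
  have hmn1 : m ≤ n - 1 := by omega
  have hsplit : ∀ a b : ℕ, a ≤ b →
      (∑ i ∈ Finset.range b, hammingDist (Γ i) (Γ (i + 1))) =
      (∑ i ∈ Finset.range a, hammingDist (Γ i) (Γ (i + 1))) +
      ∑ i ∈ Finset.Ico a b, hammingDist (Γ i) (Γ (i + 1)) := by
    intro a b hab
    simp only [Finset.range_eq_Ico]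
    rw [← Finset.sum_Ico_consecutive _ (Nat.zero_le a) hab]
  have htail : ∑ i ∈ Finset.Ico m (n - 1), hammingDist (Γ i) (Γ (i + 1)) = 0 := by
    have h1 := hd m
    have h2' := hsplit m (n - 1) hmn1
    omega
  have hSm : hammingDist (Γ 0) (Γ m) =
      ∑ i ∈ Finset.range m, hammingDist (Γ i) (Γ (i + 1)) := by
    have h1 := hd m
    have h2' := hsplit m (n - 1) hmn1
    omega
  -- Γ constant on [m, n)
  have hconst : ∀ j, m ≤ j → j < n → Γ j = Γ m := by
    intro j hmj hjn
    induction j with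
    | zero => rw [Nat.le_zero.mp hmj]
    | succ j ih =>
      rcases Nat.eq_or_lt_of_le hmj with h | h
      · rw [← h]
      · have hj : Γ j = Γ m := ih (by omega) (by omega)
        have hz : hammingDist (Γ j) (Γ (j + 1)) = 0 := by
          have hmem : j ∈ Finset.Ico m (n - 1) := by rw [Finset.mem_Ico]; omega
          exact (Finset.sum_eq_zero_iff.mp htail) j hmem
        have := hammingDist_eq_zero.mp hz
        rw [← this, hj]
  -- d(0,j) = S j for j ≤ m
  have hval : ∀ j, j ≤ m →
      hammingDist (Γ 0) (Γ j) = ∑ i ∈ Finset.range j, hammingDist (Γ i) (Γ (i + 1)) := by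
    intro j hj
    have h1 := hd j
    have h2' : hammingDist (Γ 0) (Γ m) ≤ hammingDist (Γ 0) (Γ j) +
        ∑ i ∈ Finset.Ico j m, hammingDist (Γ i) (Γ (i + 1)) :=
      le_trans (hammingDist_triangle _ (Γ j) _) (Nat.add_le_add_left (tri_aux Γ j m hj) _)
    have h3 := hsplit j m hj
    omega
  intro i hi
  rcases Nat.lt_or_ge i m with h | h
  · rw [hval i (by omega), hval (i + 1) (by omega)]
    apply Finset.sum_le_sum_of_subset
    exact Finset.range_subset_range.mpr (by omega)
  · rw [hconst i h (by omega), hconst (i + 1) (by omega) hi]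
end

section
/- Let Γ = (π₁,…,πₙ) be a path of activation patterns in {0,1}^N with r₂(Γ) > 0 and χ(Γ) = 0. Then for every index 1 ≤ k ≤ n, the maximal Hamming distance to the start over the prefix equals the Hamming length of the prefix: max_{1≤j≤k} d_H(π₁, πⱼ) = Σ_{i=1}^{k−1} d_H(πᵢ, πᵢ₊₁). -/
/-!
If `χ(Γ) = 0`, some pattern `πⱼ` lies at distance `r₂(Γ)` from `π₁`. Since `d_H(π₁, πⱼ)` is at most
the length of the path up to `j`, which is at most `r₂(Γ)`, the path is a geodesic up to `j`.
A geodesic stays a geodesic when truncated, so every prefix ending at or before `πⱼ` realises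
its length as a distance from `π₁`; a longer prefix has length at most `r₂(Γ) = d_H(π₁, πⱼ)`.
-/

open Finset

section HammingPath

variable {ι : Type*} {β : Type*} [Fintype ι] [DecidableEq β]

def hammingLength (Γ : ℕ → ι → β) (m : ℕ) : ℕ :=
  ∑ i ∈ range m, hammingDist (Γ i) (Γ (i + 1))

theorem hammingDist_le_sum_Ico (Γ : ℕ → ι → β) {a b : ℕ} (h : a ≤ b) :
    hammingDist (Γ a) (Γ b) ≤ ∑ i ∈ Ico a b, hammingDist (Γ i) (Γ (i + 1)) := by
  have := dist_le_Ico_sum_dist (fun i => Hamming.toHamming (Γ i)) h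
  push_cast at this
  exact_mod_cast this

theorem hammingLength_mono (Γ : ℕ → ι → β) : Monotone (hammingLength Γ) :=
  fun _ _ h => sum_le_sum_of_subset (range_subset_range.mpr h)

theorem hammingDist_le_hammingLength (Γ : ℕ → ι → β) (m : ℕ) :
    hammingDist (Γ 0) (Γ m) ≤ hammingLength Γ m := by
  rw [hammingLength, range_eq_Ico]
  exact hammingDist_le_sum_Ico Γ m.zero_le

theorem hammingLength_le_hammingDist_of_le {Γ : ℕ → ι → β} {j m : ℕ}
    (hj : hammingLength Γ j ≤ hammingDist (Γ 0) (Γ j)) (hmj : m ≤ j) :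
    hammingLength Γ m ≤ hammingDist (Γ 0) (Γ m) := by
  have hsplit := sum_range_add_sum_Ico (fun i => hammingDist (Γ i) (Γ (i + 1))) hmj
  have htri := hammingDist_triangle (Γ 0) (Γ m) (Γ j)
  have htail := hammingDist_le_sum_Ico Γ hmj
  unfold hammingLength at hj ⊢
  omega

theorem sup_range_hammingDist_le_hammingLength (Γ : ℕ → ι → β) (k : ℕ) :
    (range k).sup (fun i => hammingDist (Γ 0) (Γ i)) ≤ hammingLength Γ (k - 1) :=
  Finset.sup_le fun i hi =>
    (hammingDist_le_hammingLength Γ i).trans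
      (hammingLength_mono Γ (by rw [mem_range] at hi; omega))

end HammingPath

theorem r1_eq_r2_of_chi_eq_zero {N n : ℕ} {Γ : ℕ → Fin N → Bool} (h : chi n Γ = 0) :
    r1 n Γ = r2 n Γ := by
  unfold chi at h
  by_cases h0 : r2 n Γ = 0
  · simp [h0] at h -- `r₁ / 0 = 0` in Lean, so then `χ = 1`
  · have : (r1 n Γ : ℝ) / r2 n Γ = 1 := by linarith
    exact_mod_cast (div_eq_one_iff_eq (by exact_mod_cast h0)).mp this

theorem flat_prefix_eq_general {N : ℕ} (n : ℕ) (Γ : ℕ → Fin N → Bool)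
    (hflat : chi n Γ = 0) :
    ∀ k : ℕ, 1 ≤ k → k ≤ n →
      (Finset.range k).sup (fun j => hammingDist (Γ 0) (Γ j)) =
        ∑ i ∈ Finset.range (k - 1), hammingDist (Γ i) (Γ (i + 1)) := by
  intro k hk hkn
  obtain ⟨j, hjn, hj⟩ := exists_mem_eq_sup (range n) (nonempty_range_iff.mpr (by omega))
    fun i => hammingDist (Γ 0) (Γ i)
  rw [mem_range] at hjn
  have hj_far : hammingLength Γ (n - 1) ≤ hammingDist (Γ 0) (Γ j) :=
    hj ▸ (r1_eq_r2_of_chi_eq_zero hflat).ge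
  have hj_geodesic : hammingLength Γ j ≤ hammingDist (Γ 0) (Γ j) :=
    (hammingLength_mono Γ (by omega)).trans hj_far
  refine le_antisymm (sup_range_hammingDist_le_hammingLength Γ k) ?_
  rcases le_total (k - 1) j with hkj | hjk
  · exact (hammingLength_le_hammingDist_of_le hj_geodesic hkj).trans
      (le_sup (f := fun i => hammingDist (Γ 0) (Γ i)) (mem_range.mpr (by omega)))
  · exact ((hammingLength_mono Γ (by omega)).trans hj_far).trans
      (le_sup (f := fun i => hammingDist (Γ 0) (Γ i)) (mem_range.mpr (by omega)))

/-- if `r₂(Γ) > 0` and `χ(Γ) = 0`, then for every prefix length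
`1 ≤ k ≤ n` the maximal Hamming distance to the start over the prefix equals
the Hamming length of the prefix. -/
theorem flat_prefix_eq {N : ℕ} (n : ℕ) (Γ : ℕ → Fin N → Bool)
    (h2 : 0 < r2 n Γ) (hflat : chi n Γ = 0) :
    ∀ k : ℕ, 1 ≤ k → k ≤ n →
      (Finset.range k).sup (fun j => hammingDist (Γ 0) (Γ j)) =
        ∑ i ∈ Finset.range (k - 1), hammingDist (Γ i) (Γ (i + 1)) :=
  flat_prefix_eq_general n Γ hflat
end

section
/- (Failure of sub-additivity) Let π₁ = (0,0,0), π₂ = (0,0,1), π₃ = (1,1,1), π₄ = (1,0,1) in {0,1}³, and consider the connected paths Γ₁ = (π₁, π₂) and Γ₂ = (π₂, π₃, π₄) with concatenation Γ₁ ⊕ Γ₂ = (π₁, π₂, π₃, π₄). Then χ(Γ₁ ⊕ Γ₂) = 1/4 while χ(Γ₁) + χ(Γ₂) = 0 + 1/3 = 1/3, so χ(Γ₁) + χ(Γ₂) > χ(Γ₁ ⊕ Γ₂). Hence the space folding measure is not sub-additive with respect to concatenation of connected paths. -/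
/-- Failure of sub-additivity: with `π₁ = (0,0,0)`, `π₂ = (0,0,1)`,
`π₃ = (1,1,1)`, `π₄ = (1,0,1)`, the connected paths `Γ₁ = (π₁, π₂)` and
`Γ₂ = (π₂, π₃, π₄)` satisfy `χ(Γ₁ ⊕ Γ₂) = 1/4`, `χ(Γ₁) = 0`, `χ(Γ₂) = 1/3`,
hence `χ(Γ₁) + χ(Γ₂) > χ(Γ₁ ⊕ Γ₂)`. -/
theorem chi_not_subadditive :
    let p1 : Fin 3 → Bool := ![false, false, false]
    let p2 : Fin 3 → Bool := ![false, false, true]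
    let p3 : Fin 3 → Bool := ![true, true, true]
    let p4 : Fin 3 → Bool := ![true, false, true]
    let Γ1 : ℕ → Fin 3 → Bool := fun i => if i = 0 then p1 else p2
    let Γ2 : ℕ → Fin 3 → Bool := fun i => if i = 0 then p2 else if i = 1 then p3 else p4
    let Γ12 : ℕ → Fin 3 → Bool :=
      fun i => if i = 0 then p1 else if i = 1 then p2 else if i = 2 then p3 else p4
    chi 4 Γ12 = 1 / 4 ∧ chi 2 Γ1 = 0 ∧ chi 3 Γ2 = 1 / 3 ∧
      chi 2 Γ1 + chi 3 Γ2 > chi 4 Γ12 := by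
  intro p1 p2 p3 p4 Γ1 Γ2 Γ12
  have h1 : r1 4 Γ12 = 3 := by decide
  have h2 : r2 4 Γ12 = 4 := by decide
  have h3 : r1 2 Γ1 = 1 := by decide
  have h4 : r2 2 Γ1 = 1 := by decide
  have h5 : r1 3 Γ2 = 2 := by decide
  have h6 : r2 3 Γ2 = 3 := by decide
  simp only [chi, h1, h2, h3, h4, h5, h6]
  norm_num
end
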